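/- arXiv:math/0409341 — 2 statements merged into one kernel-verified Lean document; each statement's English description precedes it below -/
import Mathlib

section
/- Let R be a commutative ring with an injective ring endomorphism σ, and let c ∈ R be a nonzerodivisor with σ(c) = c. Let A, B be n×n matrices over R and m ≥ 1 an integer such that A·σ(A)·σ²(A)⋯σ^{m−1}(A) = c·Id and B·σ(B)⋯σ^{m−1}(B) = c·Id, where σ(A) denotes entrywise application of σ. If Φ is an n×n matrix over R satisfying Φ·A = B·σ(Φ), then σ^m(Φ) = Φ. -/
/-- Let `σ` be an injective ring endomorphism of a commutative ring `R`, and `c` a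
nonzerodivisor fixed by `σ`. If `A, B` are `n × n` matrices whose twisted `m`-fold
products `A·σ(A)⋯σ^{m-1}(A)` and `B·σ(B)⋯σ^{m-1}(B)` both equal `c • 1`, and
`Φ·A = B·σ(Φ)`, then `σ^m(Φ) = Φ` (entrywise). -/
theorem frobenius_iterate_fixed_of_intertwine
    {R : Type*} [CommRing R] (σ : R →+* R) (hσ : Function.Injective σ)
    (c : R) (hc : c ∈ nonZeroDivisors R) (hσc : σ c = c)
    {n m : ℕ} (hm : 1 ≤ m) (A B Φ : Matrix (Fin n) (Fin n) R)
    (hA : (List.ofFn fun i : Fin m => A.map ((⇑σ)^[(i : ℕ)])).prod = c • 1)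
    (hB : (List.ofFn fun i : Fin m => B.map ((⇑σ)^[(i : ℕ)])).prod = c • 1)
    (hΦ : Φ * A = B * Φ.map σ) :
    Φ.map ((⇑σ)^[m]) = Φ := by
  have key : ∀ k : ℕ,
      Φ * (List.ofFn fun i : Fin k => A.map ((⇑σ)^[(i : ℕ)])).prod
        = (List.ofFn fun i : Fin k => B.map ((⇑σ)^[(i : ℕ)])).prod * Φ.map ((⇑σ)^[k]) := by
    intro k
    induction k with
    | zero => simp
    | succ k ih =>
      have hstep : Φ.map ((⇑σ)^[k]) * A.map ((⇑σ)^[k])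
          = B.map ((⇑σ)^[k]) * Φ.map ((⇑σ)^[k + 1]) := by
        have h1 := congrArg (fun M => M.map (⇑(σ ^ k))) hΦ
        simp only [Matrix.map_mul] at h1
        rw [Matrix.map_map, RingHom.coe_pow, ← Function.iterate_succ σ k] at h1
        simpa only [RingHom.coe_pow] using h1
      have hofA : (List.ofFn fun i : Fin (k + 1) => A.map ((⇑σ)^[(i : ℕ)])).prod
          = (List.ofFn fun i : Fin k => A.map ((⇑σ)^[(i : ℕ)])).prod * A.map ((⇑σ)^[k]) := by
        rw [List.ofFn_succ']
        simp [List.prod_concat]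
      have hofB : (List.ofFn fun i : Fin (k + 1) => B.map ((⇑σ)^[(i : ℕ)])).prod
          = (List.ofFn fun i : Fin k => B.map ((⇑σ)^[(i : ℕ)])).prod * B.map ((⇑σ)^[k]) := by
        rw [List.ofFn_succ']
        simp [List.prod_concat]
      rw [hofA, hofB, ← mul_assoc, ih, mul_assoc, hstep, mul_assoc]
  have h := key m
  rw [hA, hB] at h
  have h2 : c • Φ = c • Φ.map ((⇑σ)^[m]) := by
    rw [Matrix.mul_smul, Matrix.smul_mul, mul_one, one_mul] at h
    exact h
  ext i j
  have := congrArg (fun M => M i j) h2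
  simp only [Matrix.smul_apply, smul_eq_mul] at this
  exact (mul_cancel_left_mem_nonZeroDivisors hc).mp this.symm
end

section
/- Let q be a prime power, K a field containing F_q, and A an invertible n×n matrix over K. Consider the solution set S = { v ∈ K^n : v^{[q]} = A·v }, where v^{[q]} denotes the vector obtained by raising every coordinate of v to the q-th power. Then (a) S is an F_q-subspace of K^n, and (b) any family of elements of S that is linearly independent over F_q is linearly independent over K; in particular dim_{F_q} S ≤ n. -/
/-!
Since `x ↦ x ^ q` is an `F_q`-algebra endomorphism of `K`, the solutions of `v^{[q]} = A v` form
the equalizer of two `F_q`-linear maps. For (b), `v ↦ A⁻¹ v^{[q]}` is Frobenius-semilinear and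
fixes every solution; applying it to a shortest normalized `K`-linear relation among solutions
and subtracting gives a shorter relation, so the coefficients are fixed by Frobenius, hence lie
in `F_q`, contradicting `F_q`-linear independence.
-/

open Polynomial Finset Matrix

theorem FiniteField.mem_range_of_pow_card_eq_self {F K : Type*} [Field F] [Fintype F] [Field K]
    [Algebra F K] {x : K} (hx : x ^ Fintype.card F = x) : x ∈ (algebraMap F K).range := by
  have hsplit : (X ^ Fintype.card F - X : F[X]).Splits := by
    rw [splits_iff_card_roots, roots_X_pow_card_sub_X,
      X_pow_card_sub_X_natDegree_eq _ Fintype.one_lt_card]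
    rfl
  exact hsplit.mem_range_of_isRoot (X_pow_card_sub_X_ne_zero _ Fintype.one_lt_card)
    (by simp [hx])

def RingHom.compLeftₛₗ {K : Type*} [Semiring K] (σ : K →+* K) (ι : Type*) :
    (ι → K) →ₛₗ[σ] ι → K where
  toFun v := σ ∘ v
  map_add' v w := funext fun i => map_add σ (v i) (w i)
  map_smul' c v := funext fun i => map_mul σ c (v i)

theorem LinearIndependent.of_restrictScalars_of_isFixedPt {F K V ι : Type*} [CommRing F]
    [Field K] [Algebra F K] [AddCommGroup V] [Module K V] [Module F V] [IsScalarTower F K V]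
    {σ : K →+* K} (hσ : ∀ c, σ c = c → c ∈ (algebraMap F K).range) (T : V →ₛₗ[σ] V)
    {b : ι → V} (hb : ∀ i, Function.IsFixedPt T (b i)) (hli : LinearIndependent F b) :
    LinearIndependent K b := by
  classical
  rw [linearIndependent_iff'] at hli ⊢
  intro s
  induction s using Finset.strongInduction with | H s ih => ?_
  intro g hg i₀ hi₀
  by_contra hgi₀
  set c : ι → K := fun i => (g i₀)⁻¹ * g i
  have hc₀ : c i₀ = 1 := inv_mul_cancel₀ hgi₀
  have hc : ∑ i ∈ s, c i • b i = 0 := by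
    simp only [c, mul_smul, ← smul_sum, hg, smul_zero]
  have hσc : ∑ i ∈ s, σ (c i) • b i = 0 := by
    simpa only [map_sum, map_smulₛₗ, fun i => (hb i).eq, map_zero] using congr(T $hc)
  -- Subtracting the relation from its image under `T` kills the `i₀` term.
  have hfix : ∀ i ∈ s, σ (c i) = c i := by
    have hdiff : ∑ i ∈ s.erase i₀, (σ (c i) - c i) • b i = 0 := by
      rw [sum_erase _ (by rw [hc₀, map_one, sub_self, zero_smul])]
      simp only [sub_smul, sum_sub_distrib, hσc, hc, sub_zero]
    intro i hi
    obtain rfl | hne := eq_or_ne i i₀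
    · rw [hc₀, map_one]
    · exact sub_eq_zero.1 (ih _ (erase_ssubset hi₀) _ hdiff i (mem_erase.2 ⟨hne, hi⟩))
  choose! a ha using fun i hi => RingHom.mem_range.1 (hσ (c i) (hfix i hi))
  have ha_rel : ∑ i ∈ s, a i • b i = 0 := by
    rw [← hc]
    exact sum_congr rfl fun i hi => by rw [← algebraMap_smul K, ha i hi]
  have ha₀ : a i₀ = 0 := hli s a ha_rel i₀ hi₀
  rw [← ha i₀ hi₀, ha₀, map_zero] at hc₀
  exact zero_ne_one hc₀

theorem Matrix.linearIndependent_of_comp_eq_mulVec {F K ι n : Type*} [CommRing F] [Field K]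
    [Algebra F K] [Fintype n] [DecidableEq n] {σ : K →+* K}
    (hσ : ∀ c, σ c = c → c ∈ (algebraMap F K).range) {A : Matrix n n K} (hA : IsUnit A)
    {b : ι → n → K} (hb : ∀ i, σ ∘ b i = A *ᵥ b i) (hli : LinearIndependent F b) :
    LinearIndependent K b :=
  hli.of_restrictScalars_of_isFixedPt hσ ((A⁻¹).mulVecLin ∘ₛₗ σ.compLeftₛₗ n) fun i => by
    change A⁻¹ *ᵥ (σ ∘ b i) = b i
    rw [hb, mulVec_mulVec, nonsing_inv_mul _ ((isUnit_iff_isUnit_det A).1 hA), one_mulVec]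

def Matrix.frobeniusSolutions (F : Type*) {K n : Type*} [Field F] [Fintype F] [Field K]
    [Algebra F K] [Fintype n] (A : Matrix n n K) : Submodule F (n → K) :=
  LinearMap.eqLocus (AlgHom.compLeft (FiniteField.frobeniusAlgHom F K) n).toLinearMap
    (A.mulVecLin.restrictScalars F)

/-- Let `F = F_q ⊆ K` be fields, `A ∈ GL_n(K)`, and
`S = { v ∈ Kⁿ : v^{[q]} = A·v }` (coordinatewise `q`-th power). Then (a) `S` is an
`F_q`-subspace of `Kⁿ`, and (b) any family of elements of `S` linearly independent
over `F_q` is linearly independent over `K`. -/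
theorem frobenius_eigenspace_Fq_structure
    (q : ℕ) {F K : Type*} [Field F] [Fintype F] (hF : Fintype.card F = q)
    [Field K] [Algebra F K] {n : ℕ}
    (A : Matrix (Fin n) (Fin n) K) (hA : IsUnit A)
    (S : Set (Fin n → K))
    (hS : S = { v : Fin n → K | (fun i => v i ^ q) = A.mulVec v }) :
    ((0 : Fin n → K) ∈ S ∧
      (∀ v ∈ S, ∀ w ∈ S, v + w ∈ S) ∧
      (∀ (c : F), ∀ v ∈ S, algebraMap F K c • v ∈ S)) ∧
    (∀ {ι : Type*} (b : ι → Fin n → K), (∀ i, b i ∈ S) →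
      LinearIndependent F b → LinearIndependent K b) := by
  subst hF
  have hS' : S = A.frobeniusSolutions F := hS
  subst hS'
  refine ⟨⟨zero_mem _, fun v hv w hw => add_mem hv hw, fun c v hv => ?_⟩, fun b hb => ?_⟩
  · rw [algebraMap_smul]
    exact (A.frobeniusSolutions F).smul_mem c hv
  · exact linearIndependent_of_comp_eq_mulVec (σ := (FiniteField.frobeniusAlgHom F K).toRingHom)
      (fun c hc => FiniteField.mem_range_of_pow_card_eq_self hc) hA hb
end
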